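/- Combining the two previous bounds: under the hypotheses of Propositions 1 and 2, if q is a polynomial of degree at most N-1 with q(x_i) = f(x_i) at the k grid points, |q^{(m)}(x_{c,1}) - f^{(m)}(x_{c,1})| ≤ C h^{N-m} for m = 1,...,α, and |q^{(n)}(x_{c,2}) - f^{(n)}(x_{c,2})| ≤ C h^{N-n} for n = 1,...,β, then sup_{x ∈ [x_{c,1}, x_{c,2}]} |f(x) - q(x)| = O(h^N). -/

import Mathlib

/-!
Let `g = f - q` and let `T` be the Taylor polynomial of `g` at `h c₁` of degree `< N`. Taylor's
theorem bounds `g⁽ⁿ⁾ - T⁽ⁿ⁾` by `O(h^(N-n))` on `[h c₁, h c₂]`, so, by the hypotheses on `q`, the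
rescaled polynomial `t ↦ T(h t)` has all its Hermite data of size `O(h^N)`. Unisolvence makes the
Hermite data an injective linear map on polynomials of degree `< N`; writing a polynomial through a
left inverse of it bounds it on `[c₁, c₂]` by a constant times its data. Hence `T = O(h^N)` on
`[h c₁, h c₂]`, and `|g| ≤ |g - T| + |T|`.
-/

open Polynomial Set

open scoped Nat

namespace Polynomial

theorem iterate_derivative_comp_C_mul_X {R : Type*} [CommSemiring R] (p : R[X]) (h : R) (m : ℕ) :
    derivative^[m] (p.comp (C h * X)) = C (h ^ m) * (derivative^[m] p).comp (C h * X) := by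
  induction m with
  | zero => simp
  | succ m ih =>
    rw [Function.iterate_succ_apply', ih, derivative_C_mul, derivative_comp,
      Function.iterate_succ_apply', derivative_C_mul_X, pow_succ, C_mul]
    ring

theorem eval_iterate_derivative_comp_C_mul_X {R : Type*} [CommSemiring R] (p : R[X])
    (h x : R) (m : ℕ) :
    (derivative^[m] (p.comp (C h * X))).eval x = h ^ m * (derivative^[m] p).eval (h * x) := by
  simp [iterate_derivative_comp_C_mul_X, eval_comp]

theorem iteratedDeriv_eval {𝕜 : Type*} [NontriviallyNormedField 𝕜] (p : 𝕜[X])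
    (n : ℕ) : iteratedDeriv n (fun x => p.eval x) = fun x => (derivative^[n] p).eval x := by
  induction n with
  | zero => simp
  | succ n ih =>
    ext x
    rw [iteratedDeriv_succ, ih, Function.iterate_succ_apply', Polynomial.deriv]

theorem contDiff_eval {𝕜 : Type*} [NontriviallyNormedField 𝕜] (p : 𝕜[X])
    (n : WithTop ℕ∞) : ContDiff 𝕜 n fun x => p.eval x :=
  p.contDiff_aeval n

theorem exists_abs_eval_le_of_unisolvent {ι : Type*} [Fintype ι]
    (ℓ : ι → ℝ[X] →ₗ[ℝ] ℝ) (V : Submodule ℝ ℝ[X]) (hℓ : ∀ q ∈ V, (∀ j, ℓ j q = 0) → q = 0)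
    {s : Set ℝ} (hs : IsCompact s) :
    ∃ K, 0 ≤ K ∧ ∀ q ∈ V, ∀ ε, 0 ≤ ε → (∀ j, |ℓ j q| ≤ ε) → ∀ t ∈ s, |q.eval t| ≤ K * ε := by
  classical
  let L : V →ₗ[ℝ] ι → ℝ := (LinearMap.pi ℓ).comp V.subtype
  have hL : LinearMap.ker L = ⊥ :=
    LinearMap.ker_eq_bot'.2 fun q hq => Subtype.ext (hℓ q q.2 fun j => congrFun hq j)
  obtain ⟨G, hG⟩ := L.exists_leftInverse_of_injective hL
  let p (j : ι) : ℝ[X] := G fun i => if j = i then 1 else 0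
  choose B hB using fun j => hs.exists_bound_of_continuousOn (p j).continuous.continuousOn
  refine ⟨∑ j, |B j|, by positivity, fun q hq ε hε hqε t ht => ?_⟩
  have hrep : q = ∑ j, ℓ j q • p j := by
    have := congrArg Subtype.val (LinearMap.congr_fun hG ⟨q, hq⟩)
    rw [LinearMap.comp_apply, LinearMap.pi_apply_eq_sum_univ] at this
    simpa [L, p] using this.symm
  have heval : q.eval t = ∑ j, ℓ j q * (p j).eval t := by
    conv_lhs => rw [hrep]
    simp [eval_finsetSum]
  calc |q.eval t| ≤ ∑ j, |ℓ j q| * |(p j).eval t| := by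
        rw [heval]
        exact (Finset.abs_sum_le_sum_abs _ _).trans_eq (by simp only [abs_mul])
    _ ≤ ∑ j, ε * |B j| := by
        refine Finset.sum_le_sum fun j _ => mul_le_mul (hqε j) ?_ (abs_nonneg _) hε
        exact (Real.norm_eq_abs _ ▸ hB j t ht).trans (le_abs_self _)
    _ = (∑ j, |B j|) * ε := by rw [← Finset.mul_sum, mul_comm]

end Polynomial

theorem iteratedDeriv_iteratedDeriv {𝕜 F : Type*} [NontriviallyNormedField 𝕜]
    [NormedAddCommGroup F] [NormedSpace 𝕜 F] {f : 𝕜 → F} (m n : ℕ) :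
    iteratedDeriv m (iteratedDeriv n f) = iteratedDeriv (m + n) f := by
  simp only [iteratedDeriv_eq_iterate, Function.iterate_add_apply]

theorem iteratedDeriv_sub_eval {f : ℝ → ℝ} {n : ℕ} (hf : ContDiff ℝ n f) (p : ℝ[X]) (x : ℝ) :
    iteratedDeriv n (fun t => f t - p.eval t) x
      = iteratedDeriv n f x - (derivative^[n] p).eval x := by
  rw [iteratedDeriv_fun_sub hf.contDiffAt (p.contDiff_eval n).contDiffAt, p.iteratedDeriv_eval]

-- `n` terms, so of degree `< n` (unlike `taylorWithin g n`, which has degree `≤ n`)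
noncomputable def taylorPolynomial (g : ℝ → ℝ) (n : ℕ) (a : ℝ) : ℝ[X] :=
  ∑ j ∈ Finset.range n, C (iteratedDeriv j g a / j !) * (X - C a) ^ j

theorem natDegree_taylorPolynomial_le (g : ℝ → ℝ) (n : ℕ) (a : ℝ) :
    (taylorPolynomial g n a).natDegree ≤ n - 1 := by
  refine natDegree_sum_le_of_forall_le _ _ fun j hj => ?_
  have := Finset.mem_range.1 hj
  refine (natDegree_C_mul_le _ _).trans ?_
  rw [natDegree_pow, natDegree_X_sub_C, mul_one]
  omega

theorem derivative_taylorPolynomial (g : ℝ → ℝ) (n : ℕ) (a : ℝ) :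
    derivative (taylorPolynomial g (n + 1) a) = taylorPolynomial (deriv g) n a := by
  rw [taylorPolynomial, Finset.sum_range_succ', derivative_add, derivative_sum]
  simp only [pow_zero, mul_one, derivative_C, add_zero]
  refine Finset.sum_congr rfl fun j _ => ?_
  rw [derivative_C_mul, derivative_X_sub_C_pow, add_tsub_cancel_right, ← mul_assoc, ← C_mul,
    iteratedDeriv_succ', Nat.factorial_succ]
  congr 2
  push_cast
  field_simp

theorem iterate_derivative_taylorPolynomial (g : ℝ → ℝ) (m n : ℕ) (a : ℝ) :
    derivative^[m] (taylorPolynomial g n a) = taylorPolynomial (iteratedDeriv m g) (n - m) a := by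
  induction m generalizing g n with
  | zero => simp
  | succ m ih =>
    rcases n with _ | n
    · simp [taylorPolynomial]
    · rw [Function.iterate_succ_apply, derivative_taylorPolynomial, ih, iteratedDeriv_succ']
      simp

theorem taylorWithinEval_eq_eval_taylorPolynomial {g : ℝ → ℝ} {n : ℕ} {a b : ℝ}
    (hg : ContDiff ℝ n g) (hab : a < b) (x : ℝ) :
    taylorWithinEval g n (Icc a b) a x = (taylorPolynomial g (n + 1) a).eval x := by
  rw [taylor_within_apply, taylorPolynomial, eval_finsetSum]
  refine Finset.sum_congr rfl fun j hj => ?_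
  rw [iteratedDerivWithin_eq_iteratedDeriv (uniqueDiffOn_Icc hab)
    ((hg.of_le (by exact_mod_cast Finset.mem_range_succ_iff.1 hj)).contDiffAt)
    (left_mem_Icc.2 hab.le)]
  simp only [eval_mul, eval_C, eval_pow, eval_sub, eval_X, smul_eq_mul]
  ring

theorem abs_sub_eval_taylorPolynomial_le {g : ℝ → ℝ} {n : ℕ} {a b B x : ℝ}
    (hg : ContDiff ℝ n g) (hab : a < b) (hB : ∀ t ∈ Icc a b, |iteratedDeriv n g t| ≤ B)
    (hx : x ∈ Icc a b) : |g x - (taylorPolynomial g n a).eval x| ≤ B * (b - a) ^ n := by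
  rcases n with _ | n
  · simpa [taylorPolynomial] using hB x hx
  have hB0 : 0 ≤ B := (abs_nonneg _).trans (hB a (left_mem_Icc.2 hab.le))
  have hremainder := taylor_mean_remainder_bound hab.le hg.contDiffOn hx fun t ht => by
    rw [iteratedDerivWithin_eq_iteratedDeriv (uniqueDiffOn_Icc hab) hg.contDiffAt ht]
    exact hB t ht
  rw [taylorWithinEval_eq_eval_taylorPolynomial (hg.of_le (by norm_cast; omega)) hab,
    Real.norm_eq_abs] at hremainder
  calc _ ≤ B * (x - a) ^ (n + 1) / n ! := hremainder
    _ ≤ B * (x - a) ^ (n + 1) :=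
      div_le_self (mul_nonneg hB0 (pow_nonneg (sub_nonneg.2 hx.1) _))
        (mod_cast Nat.one_le_iff_ne_zero.2 n.factorial_ne_zero)
    _ ≤ B * (b - a) ^ (n + 1) := by gcongr; exacts [sub_nonneg.2 hx.1, hx.2]

theorem abs_iteratedDeriv_sub_eval_taylorPolynomial_le {g : ℝ → ℝ} {N n : ℕ} {a b B x : ℝ}
    (hg : ContDiff ℝ N g) (hn : n ≤ N) (hab : a < b)
    (hB : ∀ t ∈ Icc a b, |iteratedDeriv N g t| ≤ B) (hx : x ∈ Icc a b) :
    |iteratedDeriv n g x - (derivative^[n] (taylorPolynomial g N a)).eval x|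
      ≤ B * (b - a) ^ (N - n) := by
  have hNn : N - n + n = N := Nat.sub_add_cancel hn
  rw [iterate_derivative_taylorPolynomial]
  refine abs_sub_eval_taylorPolynomial_le ?_ hab ?_ hx
  · rw [iteratedDeriv_eq_iterate]
    exact ContDiff.iterate_deriv' _ _ (by rwa [hNn])
  · simpa only [iteratedDeriv_iteratedDeriv, hNn] using hB

section Hermite

variable {k : ℕ} (y : Fin k → ℝ) (c₁ c₂ : ℝ) (α β : ℕ)

noncomputable def hermiteFunctional : Fin k ⊕ Finset.Icc 1 α ⊕ Finset.Icc 1 β → ℝ[X] →ₗ[ℝ] ℝ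
  | .inl i => leval (y i)
  | .inr (.inl m) => leval c₁ ∘ₗ derivative ^ (m : ℕ)
  | .inr (.inr n) => leval c₂ ∘ₗ derivative ^ (n : ℕ)

@[simp]
theorem hermiteFunctional_inl (i : Fin k) (q : ℝ[X]) :
    hermiteFunctional y c₁ c₂ α β (.inl i) q = q.eval (y i) := rfl

@[simp]
theorem hermiteFunctional_inr_inl (m : Finset.Icc 1 α) (q : ℝ[X]) :
    hermiteFunctional y c₁ c₂ α β (.inr (.inl m)) q = (derivative^[m] q).eval c₁ := by
  simp [hermiteFunctional, Module.End.pow_apply]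

@[simp]
theorem hermiteFunctional_inr_inr (n : Finset.Icc 1 β) (q : ℝ[X]) :
    hermiteFunctional y c₁ c₂ α β (.inr (.inr n)) q = (derivative^[n] q).eval c₂ := by
  simp [hermiteFunctional, Module.End.pow_apply]

end Hermite

theorem abs_eval_iterate_derivative_comp_C_mul_X_le {T : ℝ[X]} {m N : ℕ} {h c u A B : ℝ}
    (hh : 0 < h) (hm : m ≤ N) (hu : |u| ≤ A * h ^ (N - m))
    (hTu : |u - (derivative^[m] T).eval (h * c)| ≤ B * h ^ (N - m)) :
    |(derivative^[m] (T.comp (C h * X))).eval c| ≤ (A + B) * h ^ N := by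
  have hT : |(derivative^[m] T).eval (h * c)| ≤ (A + B) * h ^ (N - m) := by
    linarith [abs_sub_abs_le_abs_sub ((derivative^[m] T).eval (h * c)) u,
      abs_sub_comm ((derivative^[m] T).eval (h * c)) u]
  rw [eval_iterate_derivative_comp_C_mul_X, abs_mul, abs_of_pos (pow_pos hh m)]
  calc _ ≤ h ^ m * ((A + B) * h ^ (N - m)) := by gcongr
    _ = (A + B) * h ^ N := by rw [mul_left_comm, ← pow_add, Nat.add_sub_cancel' hm]

theorem abs_le_mul_pow_of_scaled_hermite_data {N k α β : ℕ} {y : Fin k → ℝ}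
    {c₁ c₂ ℓ K C M h x : ℝ} {g : ℝ → ℝ}
    (hK : ∀ Q ∈ degreeLE ℝ ↑(N - 1), ∀ ε, 0 ≤ ε →
      (∀ j, |hermiteFunctional y c₁ c₂ α β j Q| ≤ ε) → ∀ t ∈ Icc c₁ c₂, |Q.eval t| ≤ K * ε)
    (hα : α ≤ N) (hβ : β ≤ N) (hc : c₁ < c₂) (hℓ : c₂ - c₁ ≤ ℓ) (hℓ1 : 1 ≤ ℓ)
    (hy : ∀ i, y i ∈ Icc c₁ c₂) (hh : 0 < h) (hC : 0 ≤ C)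
    (hg : ContDiff ℝ N g) (hM : ∀ t ∈ Icc (h * c₁) (h * c₂), |iteratedDeriv N g t| ≤ M)
    (hgy : ∀ i, g (h * y i) = 0)
    (hg₁ : ∀ m ∈ Finset.Icc 1 α, |iteratedDeriv m g (h * c₁)| ≤ C * h ^ (N - m))
    (hg₂ : ∀ n ∈ Finset.Icc 1 β, |iteratedDeriv n g (h * c₂)| ≤ C * h ^ (N - n))
    (hx : x ∈ Icc (h * c₁) (h * c₂)) :
    |g x| ≤ (M * ℓ ^ N + K * (C + M * ℓ ^ N)) * h ^ N := by
  have hab : h * c₁ < h * c₂ := mul_lt_mul_of_pos_left hc hh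
  have hM0 : 0 ≤ M := (abs_nonneg _).trans (hM _ (left_mem_Icc.2 hab.le))
  have hscale : ∀ c ∈ Icc c₁ c₂, h * c ∈ Icc (h * c₁) (h * c₂) := fun c hc' =>
    ⟨mul_le_mul_of_nonneg_left hc'.1 hh.le, mul_le_mul_of_nonneg_left hc'.2 hh.le⟩
  set T := taylorPolynomial g N (h * c₁)
  have hrem : ∀ n ≤ N, ∀ t ∈ Icc (h * c₁) (h * c₂),
      |iteratedDeriv n g t - (derivative^[n] T).eval t| ≤ M * ℓ ^ N * h ^ (N - n) := by
    intro n hn t ht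
    have hlen : (c₂ - c₁) ^ (N - n) ≤ ℓ ^ N :=
      (pow_le_pow_left₀ (sub_nonneg.2 hc.le) hℓ _).trans (pow_le_pow_right₀ hℓ1 (N.sub_le n))
    calc _ ≤ M * (h * c₂ - h * c₁) ^ (N - n) :=
          abs_iteratedDeriv_sub_eval_taylorPolynomial_le hg hn hab hM ht
      _ = M * (c₂ - c₁) ^ (N - n) * h ^ (N - n) := by rw [← mul_sub, mul_pow]; ring
      _ ≤ M * ℓ ^ N * h ^ (N - n) := by gcongr
  have hdata : ∀ m ≤ N, ∀ c ∈ Icc c₁ c₂, |iteratedDeriv m g (h * c)| ≤ C * h ^ (N - m) →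
      |(derivative^[m] (T.comp (Polynomial.C h * X))).eval c| ≤ (C + M * ℓ ^ N) * h ^ N :=
    fun m hm c hc' hgc =>
      abs_eval_iterate_derivative_comp_C_mul_X_le hh hm hgc (hrem m hm _ (hscale c hc'))
  have hQ := hK (T.comp (Polynomial.C h * X)) ?deg ((C + M * ℓ ^ N) * h ^ N) (by positivity)
    ?bounds (x / h) ⟨(le_div_iff₀' hh).2 hx.1, (div_le_iff₀' hh).2 hx.2⟩
  case deg =>
    refine mem_degreeLE.2 (natDegree_le_iff_degree_le.1 (natDegree_comp_le.trans ?_))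
    rw [natDegree_C_mul_X h hh.ne', mul_one]
    exact natDegree_taylorPolynomial_le g N _
  case bounds =>
    rintro (i | ⟨m, hm⟩ | ⟨n, hn⟩)
    · have hgi : |iteratedDeriv 0 g (h * y i)| ≤ C * h ^ (N - 0) := by
        rw [iteratedDeriv_zero, hgy i, abs_zero]
        positivity
      simpa using hdata 0 N.zero_le (y i) (hy i) hgi
    · simpa using hdata m ((Finset.mem_Icc.1 hm).2.trans hα) c₁ (left_mem_Icc.2 hc.le)
        (hg₁ m hm)
    · simpa using hdata n ((Finset.mem_Icc.1 hn).2.trans hβ) c₂ (right_mem_Icc.2 hc.le)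
        (hg₂ n hn)
  rw [eval_comp, eval_mul, eval_C, eval_X, mul_div_cancel₀ _ hh.ne'] at hQ
  have := hrem 0 N.zero_le x hx
  rw [iteratedDeriv_zero, Function.iterate_zero_apply, Nat.sub_zero] at this
  linarith [abs_sub_abs_le_abs_sub (g x) (T.eval x)]

theorem hermite_like_approximation_order_general
    (N k α β : ℕ) (hN : 0 < N) (hsum : α + β + k = N)
    (y : Fin k → ℝ)
    (c₁ c₂ : ℝ) (hc : c₁ < c₂)
    (hbox : ∀ i, y i ∈ Set.Ioo c₁ c₂ ∧ c₂ - c₁ ≤ 1)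
    (huniq : ∀ q : Polynomial ℝ, q.natDegree ≤ N - 1 →
      (∀ i, q.eval (y i) = 0) →
      (∀ m ∈ Finset.Icc 1 α, (Polynomial.derivative^[m] q).eval c₁ = 0) →
      (∀ n ∈ Finset.Icc 1 β, (Polynomial.derivative^[n] q).eval c₂ = 0) → q = 0)
    (f : ℝ → ℝ) (hf : ContDiff ℝ N f)
    (C : ℝ) (hC : 0 ≤ C) :
    ∃ C'' : ℝ, 0 ≤ C'' ∧ ∀ h ∈ Set.Ioc (0 : ℝ) 1,
      ∀ q : Polynomial ℝ, q.natDegree ≤ N - 1 →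
        (∀ i, q.eval (h * y i) = f (h * y i)) →
        (∀ m ∈ Finset.Icc 1 α,
          |(Polynomial.derivative^[m] q).eval (h * c₁) - iteratedDeriv m f (h * c₁)|
            ≤ C * h ^ (N - m)) →
        (∀ n ∈ Finset.Icc 1 β,
          |(Polynomial.derivative^[n] q).eval (h * c₂) - iteratedDeriv n f (h * c₂)|
            ≤ C * h ^ (N - n)) →
        ∀ x ∈ Set.Icc (h * c₁) (h * c₂), |f x - q.eval x| ≤ C'' * h ^ N := by
  obtain ⟨K, hK0, hK⟩ := exists_abs_eval_le_of_unisolvent (hermiteFunctional y c₁ c₂ α β)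
    (degreeLE ℝ ↑(N - 1)) (fun q hq hq0 => huniq q
      (natDegree_le_iff_degree_le.2 (mem_degreeLE.1 hq)) (fun i => by simpa using hq0 (.inl i))
      (fun m hm => by simpa using hq0 (.inr (.inl ⟨m, hm⟩)))
      (fun n hn => by simpa using hq0 (.inr (.inr ⟨n, hn⟩)))) isCompact_Icc
  obtain ⟨M, hM⟩ := (isCompact_closedBall (0 : ℝ) (|c₁| + |c₂|)).exists_bound_of_continuousOn
    (hf.continuous_iteratedDeriv N le_rfl).continuousOn
  set ℓ := max (c₂ - c₁) 1
  refine ⟨|M| * ℓ ^ N + K * (C + |M| * ℓ ^ N), by positivity,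
    fun h ⟨hh0, hh1⟩ q hq hq0 hq1 hq2 x hx => ?_⟩
  have hfq : ∀ n ≤ N, ∀ t, iteratedDeriv n (fun t => f t - q.eval t) t
      = iteratedDeriv n f t - (derivative^[n] q).eval t :=
    fun n hn => iteratedDeriv_sub_eval (hf.of_le (by exact_mod_cast hn)) q
  refine abs_le_mul_pow_of_scaled_hermite_data (g := fun t => f t - q.eval t) hK (by omega)
    (by omega) hc (le_max_left _ _) (le_max_right _ _) (fun i => Ioo_subset_Icc_self (hbox i).1)
    hh0 hC (hf.sub (q.contDiff_eval N)) ?_ (fun i => sub_eq_zero.2 (hq0 i).symm)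
    (fun m hm => by
      rw [hfq m ((Finset.mem_Icc.1 hm).2.trans (by omega)), abs_sub_comm]; exact hq1 m hm)
    (fun n hn => by
      rw [hfq n ((Finset.mem_Icc.1 hn).2.trans (by omega)), abs_sub_comm]; exact hq2 n hn) hx
  intro t ht
  rw [hfq N le_rfl, iterate_derivative_eq_zero (by omega), eval_zero, sub_zero]
  refine (Real.norm_eq_abs _ ▸ hM t ?_).trans (le_abs_self M)
  rw [Metric.mem_closedBall, dist_zero_right, Real.norm_eq_abs, abs_le]
  constructor <;> nlinarith [ht.1, ht.2, abs_nonneg c₁, abs_nonneg c₂, neg_abs_le c₁,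
    le_abs_self c₂]

/-- Combining Propositions 1 and 2: a polynomial `q` of degree `≤ N-1` interpolating `f` at the
`k` scaled grid points and matching its derivatives at the two control points up to errors
`C h^{N-m}` approximates `f` to order `O(h^N)` on `[h·c₁, h·c₂]`. -/
theorem hermite_like_approximation_order
    (N k α β : ℕ) (hN : 0 < N) (hsum : α + β + k = N)
    (y : Fin k → ℝ) (hy_inj : Function.Injective y)
    (c₁ c₂ : ℝ) (hc : c₁ < c₂)
    (hbox : ∀ i, y i ∈ Set.Ioo c₁ c₂ ∧ c₂ - c₁ ≤ 1)
    (huniq : ∀ q : Polynomial ℝ, q.natDegree ≤ N - 1 →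
      (∀ i, q.eval (y i) = 0) →
      (∀ m ∈ Finset.Icc 1 α, (Polynomial.derivative^[m] q).eval c₁ = 0) →
      (∀ n ∈ Finset.Icc 1 β, (Polynomial.derivative^[n] q).eval c₂ = 0) → q = 0)
    (f : ℝ → ℝ) (hf : ContDiff ℝ N f)
    (C : ℝ) (hC : 0 ≤ C) :
    ∃ C'' : ℝ, 0 ≤ C'' ∧ ∀ h ∈ Set.Ioc (0 : ℝ) 1,
      ∀ q : Polynomial ℝ, q.natDegree ≤ N - 1 →
        (∀ i, q.eval (h * y i) = f (h * y i)) →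
        (∀ m ∈ Finset.Icc 1 α,
          |(Polynomial.derivative^[m] q).eval (h * c₁) - iteratedDeriv m f (h * c₁)|
            ≤ C * h ^ (N - m)) →
        (∀ n ∈ Finset.Icc 1 β,
          |(Polynomial.derivative^[n] q).eval (h * c₂) - iteratedDeriv n f (h * c₂)|
            ≤ C * h ^ (N - n)) →
        ∀ x ∈ Set.Icc (h * c₁) (h * c₂), |f x - q.eval x| ≤ C'' * h ^ N :=
  hermite_like_approximation_order_general N k α β hN hsum y c₁ c₂ hc hbox huniq f hf C hC
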